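/- arXiv:1602.08184 — 19 statements merged into one kernel-verified Lean document; each statement's English description precedes it below -/
import Mathlib

section
/- Let R be a unital ring with involution and let a ∈ R. Then a is EP if and only if there exists x ∈ R such that (x·a)* = x·a, x·a² = a and a·x² = x. -/
def IsEP {R : Type*} [Ring R] [StarRing R] (a : R) : Prop :=
  ∃ x : R, a * x * a = a ∧ x * a * x = x ∧ a * x = x * a ∧ star (a * x) = a * x

theorem ep_iff_three_equations {R : Type*} [Ring R] [StarRing R] (a : R) :
    IsEP a ↔ ∃ x : R, star (x * a) = x * a ∧ x * a ^ 2 = a ∧ a * x ^ 2 = x := by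
  constructor
  · rintro ⟨x, h1, h2, h3, h4⟩
    refine ⟨x, ?_, ?_, ?_⟩
    · rw [← h3, h4]
    · calc x * a ^ 2 = (x * a) * a := by noncomm_ring
        _ = (a * x) * a := by rw [h3]
        _ = a := h1
    · calc a * x ^ 2 = (a * x) * x := by noncomm_ring
        _ = (x * a) * x := by rw [h3]
        _ = x := h2
  · rintro ⟨x, h1, h2, h3⟩
    have hag : a * (x ^ 2 * a) = x * a := by
      calc a * (x ^ 2 * a) = (a * x ^ 2) * a := by noncomm_ring
        _ = x * a := by rw [h3]
    have hga : (x ^ 2 * a) * a = x * a := by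
      calc (x ^ 2 * a) * a = x * (x * a ^ 2) := by noncomm_ring
        _ = x * a := by rw [h2]
    refine ⟨x ^ 2 * a, ?_, ?_, ?_, ?_⟩
    · calc a * (x ^ 2 * a) * a = (a * x ^ 2) * a * a := by noncomm_ring
        _ = x * a ^ 2 := by rw [h3]; noncomm_ring
        _ = a := h2
    · calc x ^ 2 * a * a * (x ^ 2 * a) = ((x ^ 2 * a) * a) * (x ^ 2 * a) := by noncomm_ring
        _ = (x * a) * (x ^ 2 * a) := by rw [hga]
        _ = x * (a * x ^ 2) * a := by noncomm_ring
        _ = x ^ 2 * a := by rw [h3]; noncomm_ring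
    · rw [hag, hga]
    · rw [hag, h1]
end

section
/- Let R be a unital ring with involution, let a ∈ R be EP, and let d ∈ R be the Moore-Penrose inverse of a (so a·d·a = a, d·a·d = d, (a·d)* = a·d, (d·a)* = d·a). Then the set { x ∈ R : (x·a)* = x·a, x·a² = a, a·x² = x } equals { d + (a·d)·y·(1 − a·d) : y ∈ R }. -/
def IsMoorePenroseInverse {R : Type*} [Ring R] [StarRing R] (a d : R) : Prop :=
  a * d * a = a ∧ d * a * d = d ∧ star (a * d) = a * d ∧ star (d * a) = d * a

theorem ep_solution_set_eq {R : Type*} [Ring R] [StarRing R] (a d : R)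
    (hEP : IsEP a) (hMP : IsMoorePenroseInverse a d) :
    {x : R | star (x * a) = x * a ∧ x * a ^ 2 = a ∧ a * x ^ 2 = x} =
      {x : R | ∃ y : R, x = d + (a * d) * y * (1 - a * d)} := by
  obtain ⟨g, hg1, hg2, hg3, hg4⟩ := hEP
  obtain ⟨h1, h2, h3, h4⟩ := hMP
  have e1 : a * d = a * g := by
    calc a * d = a * g * a * d := by rw [hg1]
      _ = star (a * d * (a * g)) := by rw [star_mul, hg4, h3]; noncomm_ring
      _ = star (a * g) := by rw [show a * d * (a * g) = a * d * a * g by noncomm_ring, h1]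
      _ = a * g := hg4
  have hga : star (g * a) = g * a := by rw [← hg3, hg4, hg3]
  have e2 : d * a = g * a := by
    calc d * a = d * (a * g * a) := by rw [hg1]
      _ = star (g * a * (d * a)) := by rw [star_mul, hga, h4]; noncomm_ring
      _ = star (g * a) := by rw [show g * a * (d * a) = g * (a * d) * a by noncomm_ring,
          e1, show g * (a * g) * a = g * a * g * a by noncomm_ring, hg2]
      _ = g * a := hga
  have hc : a * d = d * a := by rw [e1, e2, hg3]
  have hdad : d * (a * d) = d := by rw [← mul_assoc, h2]
  have hadd : a * d * d = d := by rw [hc]; exact h2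
  have hidem : a * d * (a * d) = a * d := by
    rw [← mul_assoc, mul_assoc a d a, ← mul_assoc, h1]
  ext x
  simp only [Set.mem_setOf_eq, pow_two]
  constructor
  · rintro ⟨hs, hxa, hax⟩
    refine ⟨x, ?_⟩
    have hex : a * d * x = x := by
      calc a * d * x = a * d * (a * (x * x)) := by rw [hax]
        _ = a * d * a * (x * x) := by noncomm_ring
        _ = x := by rw [h1, hax]
    have hxe : x * (a * d) = d := by
      calc x * (a * d) = x * (a * (a * d * d)) := by rw [hadd]
        _ = x * (a * a) * (d * d) := by noncomm_ring
        _ = a * (d * d) := by rw [hxa]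
        _ = d := by rw [← mul_assoc, hadd]
    calc x = a * d * x := hex.symm
      _ = d + (a * d * x - x * (a * d)) := by rw [hex, hxe]; abel
      _ = d + (a * d * x - a * d * (x * (a * d))) := by rw [hxe, hadd]
      _ = d + a * d * x * (1 - a * d) := by noncomm_ring
  · rintro ⟨y, rfl⟩
    have h1e : (1 - a * d) * a = 0 := by rw [sub_mul, one_mul, h1, sub_self]
    have h1ed : (1 - a * d) * d = 0 := by rw [sub_mul, one_mul, hadd, sub_self]
    have h1ee : (1 - a * d) * (a * d) = 0 := by rw [sub_mul, one_mul, hidem, sub_self]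
    have hxa' : (d + a * d * y * (1 - a * d)) * a = d * a := by
      rw [add_mul, mul_assoc, h1e, mul_zero, add_zero]
    refine ⟨?_, ?_, ?_⟩
    · rw [hxa']; exact h4
    · rw [show (d + a * d * y * (1 - a * d)) * (a * a)
          = (d + a * d * y * (1 - a * d)) * a * a by noncomm_ring, hxa', ← hc, h1]
    · calc a * ((d + a * d * y * (1 - a * d)) * (d + a * d * y * (1 - a * d)))
          = a * d * d + a * (d * (a * d)) * (y * (1 - a * d))
            + a * (a * d * (y * ((1 - a * d) * d)))
            + a * (a * d * (y * ((1 - a * d) * (a * d)) * (y * (1 - a * d)))) := by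
            noncomm_ring
        _ = d + a * d * (y * (1 - a * d)) := by
            simp only [hadd, hdad, h1ed, h1ee, mul_zero, zero_mul, add_zero]
        _ = d + a * d * y * (1 - a * d) := by noncomm_ring
end

section
/- Let R be a unital ring with involution which is prime (i.e., for all u, v ∈ R, if u·r·v = 0 for all r ∈ R then u = 0 or v = 0). Let a ∈ R be EP with Moore-Penrose inverse d. Then the set { x ∈ R : (x·a)* = x·a, x·a² = a, a·x² = x } equals the singleton {d} if and only if a = 0 or a is invertible (a is a unit of R). -/
theorem ep_solution_set_singleton_iff {R : Type*} [Ring R] [StarRing R]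
    (hprime : ∀ u v : R, (∀ r : R, u * r * v = 0) → u = 0 ∨ v = 0)
    (a d : R) (hEP : IsEP a) (hMP : IsMoorePenroseInverse a d) :
    {x : R | star (x * a) = x * a ∧ x * a ^ 2 = a ∧ a * x ^ 2 = x} = {d} ↔
      a = 0 ∨ IsUnit a := by
  obtain ⟨h1, h2, h3, h4⟩ := hMP
  obtain ⟨y, hy1, hy2, hy3, hy4⟩ := hEP
  have hsya : star (y * a) = y * a := by rw [← hy3, hy4, hy3]
  -- a * d = a * y
  have hay : a * d = a * y := by
    calc a * d = (a * y * a) * d := by rw [hy1]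
      _ = (a * y) * (a * d) := by noncomm_ring
      _ = star (a * y) * star (a * d) := by rw [hy4, h3]
      _ = star ((a * d) * (a * y)) := by rw [← star_mul]
      _ = star ((a * d * a) * y) := by noncomm_ring
      _ = star (a * y) := by rw [h1]
      _ = a * y := hy4
  -- d * a = y * a
  have hya : d * a = y * a := by
    calc d * a = d * (a * y * a) := by rw [hy1]
      _ = (d * a) * (y * a) := by noncomm_ring
      _ = star (d * a) * star (y * a) := by rw [h4, hsya]
      _ = star ((y * a) * (d * a)) := by rw [← star_mul]
      _ = star (y * (a * d * a)) := by noncomm_ring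
      _ = star (y * a) := by rw [h1]
      _ = y * a := hsya
  have hcomm : a * d = d * a := hay.trans (hy3.trans hya.symm)
  have had2' : a * d * d = d := by rw [hcomm]; exact h2
  have hda2' : d * a * a = a := by rw [← hcomm]; exact h1
  have hda2 : d * a ^ 2 = a := by rw [sq, ← mul_assoc]; exact hda2'
  have had2 : a * d ^ 2 = d := by rw [sq, ← mul_assoc]; exact had2'
  have hdmem : d ∈ {x : R | star (x * a) = x * a ∧ x * a ^ 2 = a ∧ a * x ^ 2 = x} :=
    ⟨h4, hda2, had2⟩
  constructor
  · intro hS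
    have hza : (1 - a * d) * a = 0 := by rw [sub_mul, one_mul, h1, sub_self]
    have hzd : (1 - a * d) * d = 0 := by rw [sub_mul, one_mul, had2', sub_self]
    have he2 : a * d * (a * d) = a * d := by rw [← mul_assoc, h1]
    have hze : (1 - a * d) * (a * d) = 0 := by rw [sub_mul, one_mul, he2, sub_self]
    have key : ∀ r : R, a * d * r * (1 - a * d) = 0 := by
      intro r
      set c := a * d * r * (1 - a * d) with hc
      have hca : c * a = 0 := by
        rw [hc, mul_assoc (a * d * r), hza, mul_zero]
      have hcd : c * d = 0 := by
        rw [hc, mul_assoc (a * d * r), hzd, mul_zero]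
      have hzc : (1 - a * d) * c = 0 := by
        rw [hc, ← mul_assoc, ← mul_assoc, hze, zero_mul, zero_mul]
      have hcc : c * c = 0 := by
        calc c * c = (a * d * r) * ((1 - a * d) * c) := by rw [hc, mul_assoc]
          _ = 0 := by rw [hzc, mul_zero]
      have hec : a * d * c = c := by
        calc a * d * c = (a * d * (a * d)) * r * (1 - a * d) := by rw [hc]; noncomm_ring
          _ = c := by rw [he2, hc]
      have hmem : d + c ∈ {x : R | star (x * a) = x * a ∧ x * a ^ 2 = a ∧ a * x ^ 2 = x} := by
        have hxa : (d + c) * a = d * a := by rw [add_mul, hca, add_zero]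
        refine ⟨?_, ?_, ?_⟩
        · rw [hxa]; exact h4
        · rw [sq, ← mul_assoc, hxa]; exact hda2'
        · have expand : a * (d + c) ^ 2 = a * d * d + a * d * c + a * (c * d) + a * (c * c) := by
            noncomm_ring
          rw [expand, had2', hec, hcd, hcc, mul_zero, add_zero, add_zero]
      have : d + c ∈ ({d} : Set R) := hS ▸ hmem
      have hdc : d + c = d := Set.mem_singleton_iff.mp this
      have hdc0 : d + c = d + 0 := by rw [add_zero]; exact hdc
      exact add_left_cancel hdc0
    rcases hprime (a * d) (1 - a * d) key with h0 | h0
    · left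
      calc a = a * d * a := h1.symm
        _ = 0 := by rw [h0, zero_mul]
    · right
      have had1 : a * d = 1 := by
        have := sub_eq_zero.mp h0
        exact this.symm
      have hda1 : d * a = 1 := hcomm ▸ had1
      exact ⟨⟨a, d, had1, hda1⟩, rfl⟩
  · intro h
    ext x
    simp only [Set.mem_setOf_eq, Set.mem_singleton_iff]
    constructor
    · rintro ⟨hx1, hx2, hx3⟩
      rcases h with rfl | hu
      · have hd0 : d = 0 := by rw [← h2]; simp
        have hx0 : x = 0 := by rw [← hx3]; simp
        rw [hx0, hd0]
      · obtain ⟨u, rfl⟩ := hu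
        have hxu : x = (↑u⁻¹ : R) := by
          have h' : x * (↑u : R) = 1 := by
            have := congrArg (· * (↑u⁻¹ : R)) hx2
            simpa [sq, mul_assoc] using this
          calc x = x * ((↑u : R) * ↑u⁻¹) := by simp
            _ = ↑u⁻¹ := by rw [← mul_assoc, h', one_mul]
        have hdu : d = (↑u⁻¹ : R) := by
          have := congrArg (fun z => (↑u⁻¹ : R) * (z * (↑u⁻¹ : R))) h1
          simpa [mul_assoc] using this
        rw [hxu, hdu]
    · rintro rfl
      exact hdmem
end

section
/- Let R be a unital ring with involution and let a ∈ R. Then a is EP if and only if there exists x ∈ R such that a·x·a = a, x ∈ a·R, a ∈ x·R, and x* ∈ R·a (i.e., there exist u, v, w ∈ R with x = a·u, a = x·v and x* = w·a). -/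
theorem ep_iff_inner_inverse_ranges {R : Type*} [Ring R] [StarRing R] (a : R) :
    IsEP a ↔ ∃ x : R, a * x * a = a ∧ (∃ u : R, x = a * u) ∧ (∃ v : R, a = x * v) ∧
      (∃ w : R, star x = w * a) := by
  constructor
  · rintro ⟨x, h1, h2, h3, h4⟩
    refine ⟨x, h1, ⟨x * x, ?_⟩, ⟨a * a, ?_⟩, ⟨star x * x, ?_⟩⟩
    · calc x = x * a * x := h2.symm
        _ = a * x * x := by rw [← h3]
        _ = a * (x * x) := by rw [mul_assoc]
    · calc a = a * x * a := h1.symm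
        _ = x * a * a := by rw [h3]
        _ = x * (a * a) := by rw [mul_assoc]
    · calc star x = star (x * a * x) := by rw [h2]
        _ = star x * star (x * a) := by rw [star_mul]
        _ = star x * star (a * x) := by rw [h3]
        _ = star x * (a * x) := by rw [h4]
        _ = star x * (x * a) := by rw [h3]
        _ = star x * x * a := by rw [← mul_assoc]
  · rintro ⟨x, h1, ⟨u, hu⟩, ⟨v, hv⟩, ⟨w, hw⟩⟩
    have hx2 : x = star a * star w := by
      calc x = star (star x) := (star_star x).symm
        _ = star (w * a) := by rw [hw]
        _ = star a * star w := by rw [star_mul]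
    have hA : a = star a * (star w * v) := by
      calc a = x * v := hv
        _ = star a * star w * v := by rw [hx2]
        _ = star a * (star w * v) := by rw [mul_assoc]
    have hstar1 : star a * star x * star a = star a := by
      have := congrArg star h1
      simpa [star_mul, mul_assoc] using this
    have hI : star a * star x * a = a := by
      calc star a * star x * a
          = star a * star x * (star a * (star w * v)) := by rw [← hA]
        _ = star a * star x * star a * (star w * v) := by rw [← mul_assoc]
        _ = star a * (star w * v) := by rw [hstar1]
        _ = a := hA.symm
    have hII : star a * x * a = star a := by
      have := congrArg star hI
      simpa [star_mul, star_star, mul_assoc] using this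
    have hxu_star : star x = star u * star a := by rw [hu, star_mul]
    set s : R := u * a with hs_def
    set r : R := star a * star u * star a * x with hr_def
    have hs : a * a * s = a := by
      calc a * a * s = a * a * (u * a) := by rw [hs_def]
        _ = a * (a * u) * a := by rw [mul_assoc, mul_assoc, mul_assoc]
        _ = a * x * a := by rw [← hu]
        _ = a := h1
    have hr : r * a * a = a := by
      have h0 : star a * star u * star a * a = a := by
        have := hI
        rw [hxu_star, ← mul_assoc] at this
        exact this
      calc r * a * a = star a * star u * star a * x * a * a := by rw [hr_def]
        _ = star a * star u * (star a * x * a) * a := by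
              simp only [mul_assoc]
        _ = star a * star u * star a * a := by rw [hII]
        _ = a := h0
    have key : a * s = r * a := by
      calc a * s = r * a * a * s := by rw [hr]
        _ = r * (a * a * s) := by simp only [mul_assoc]
        _ = r * a := by rw [hs]
    set g : R := r * a * s with hg_def
    have hag : a * g = a * s := by
      calc a * g = a * (r * a * s) := by rw [hg_def]
        _ = a * (a * s * s) := by rw [← key]
        _ = a * a * s * s := by simp only [mul_assoc]
        _ = a * s := by rw [hs]
    have hga : g * a = r * a := by
      calc g * a = r * a * s * a := by rw [hg_def]
        _ = r * (a * s) * a := by simp only [mul_assoc]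
        _ = r * (r * a) * a := by rw [key]
        _ = r * (r * a * a) := by simp only [mul_assoc]
        _ = r * a := by rw [hr]
    have hcomm : a * g = g * a := by rw [hag, key, hga]
    have haga : a * g * a = a := by
      rw [hag, key, hr]
    have hgag : g * a * g = g := by
      calc g * a * g = r * a * g := by rw [hga]
        _ = r * (a * g) := by rw [mul_assoc]
        _ = r * (a * s) := by rw [hag]
        _ = r * a * s := by rw [← mul_assoc]
        _ = g := hg_def.symm
    have hae : a * (a * g) = a := by
      calc a * (a * g) = a * (g * a) := by rw [hcomm]
        _ = a * g * a := by rw [← mul_assoc]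
        _ = a := haga
    have he2 : star a * star x * (a * g) = a * g := by
      rw [← mul_assoc, hI]
    have he3 : star (a * g) = star (a * g) * (x * a) := by
      have h := congrArg star he2
      simp only [star_mul, star_star, mul_assoc] at h ⊢
      exact h.symm
    have he4 : star (a * g) = star (a * g) * (a * g) := by
      calc star (a * g) = star (a * g) * (x * a) := he3
        _ = star (a * g) * (x * (a * (a * g))) := by rw [hae]
        _ = star (a * g) * (x * a) * (a * g) := by simp only [mul_assoc]
        _ = star (a * g) * (a * g) := by rw [← he3]
    have h6 : a * g = star (a * g) * (a * g) := by
      have := congrArg star he4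
      rw [star_star, star_mul, star_star] at this
      exact this
    have he5 : star (a * g) = a * g := by rw [he4, ← h6]
    exact ⟨g, haga, hgag, hcomm, he5⟩
end

section
/- Let R be a unital ring with involution and let a ∈ R. Then a is EP if and only if there exists x ∈ R such that x·a·x = x, the left annihilators of x and a coincide (for all t ∈ R, t·x = 0 ↔ t·a = 0), and the right annihilator of x* is contained in the right annihilator of a (for all t ∈ R, x*·t = 0 → a·t = 0). -/
theorem ep_iff_outer_inverse_annihilators {R : Type*} [Ring R] [StarRing R] (a : R) :
    IsEP a ↔ ∃ x : R, x * a * x = x ∧ (∀ t : R, t * x = 0 ↔ t * a = 0) ∧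
      (∀ t : R, star x * t = 0 → a * t = 0) := by
  constructor
  · rintro ⟨x, h1, h2, h3, h4⟩
    have hxa2 : x * (a * a) = a := by
      calc x * (a * a) = x * a * a := by rw [mul_assoc]
        _ = a * x * a := by rw [h3]
        _ = a := h1
    have hax2 : a * (x * x) = x := by
      calc a * (x * x) = a * x * x := by rw [mul_assoc]
        _ = x * a * x := by rw [h3]
        _ = x := h2
    have hl : ∀ t : R, t * x = 0 ↔ t * a = 0 := by
      intro t
      constructor
      · intro h
        calc t * a = t * (x * (a * a)) := by rw [hxa2]
          _ = t * x * (a * a) := by rw [mul_assoc]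
          _ = 0 := by rw [h, zero_mul]
      · intro h
        calc t * x = t * (a * (x * x)) := by rw [hax2]
          _ = t * a * (x * x) := by rw [mul_assoc]
          _ = 0 := by rw [h, zero_mul]
    refine ⟨x, h2, hl, fun t ht => ?_⟩
    have h1' : star t * x = 0 := by
      have := congrArg star ht
      simpa using this
    have h2' : star t * a = 0 := (hl (star t)).1 h1'
    have h3' : star a * t = 0 := by
      have := congrArg star h2'
      simpa using this
    have h4' : a * x * t = 0 := by
      calc a * x * t = star (a * x) * t := by rw [h4]
        _ = star x * (star a * t) := by rw [star_mul, mul_assoc]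
        _ = 0 := by rw [h3', mul_zero]
    have h5' : a * (a * x) = a := by
      calc a * (a * x) = a * (x * a) := by rw [h3]
        _ = a * x * a := by rw [mul_assoc]
        _ = a := h1
    calc a * t = a * (a * x) * t := by rw [h5']
      _ = a * (a * x * t) := by rw [mul_assoc]
      _ = 0 := by rw [h4', mul_zero]
  · rintro ⟨x, h2, hl, hr⟩
    have hxaa : x * a * a = a := by
      have h0 : (1 - x * a) * x = 0 := by
        rw [sub_mul, one_mul, h2, sub_self]
      have h1 : (1 - x * a) * a = 0 := (hl _).1 h0
      rw [sub_mul, one_mul, sub_eq_zero] at h1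
      exact h1.symm
    have h3' : star x * (1 - star (x * a)) = 0 := by
      rw [mul_sub, mul_one, star_mul, ← mul_assoc, ← star_mul, ← star_mul,
        ← mul_assoc, h2, sub_self]
    have haE : a * (1 - star (x * a)) = 0 := hr _ h3'
    have haE' : a * star (x * a) = a := by
      rw [mul_sub, mul_one, sub_eq_zero] at haE
      exact haE.symm
    have h5 : x * a * star (x * a) = x * a := by
      calc x * a * star (x * a) = x * (a * star (x * a)) := by rw [mul_assoc]
        _ = x * a := by rw [haE']
    have he : star (x * a) = x * a := by
      calc star (x * a) = star (x * a * star (x * a)) := by rw [h5]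
        _ = star (star (x * a)) * star (x * a) := by rw [star_mul]
        _ = x * a * star (x * a) := by rw [star_star]
        _ = x * a := h5
    have hae : a * (x * a) = a := by rw [← he]; exact haE'
    have haxa : a * x * a = a := by rw [mul_assoc]; exact hae
    have ht : (a * x - x * a) * a = 0 := by
      rw [sub_mul, haxa, hxaa, sub_self]
    have htx : (a * x - x * a) * x = 0 := (hl _).2 ht
    have hax2 : a * x * x = x := by
      rw [sub_mul, sub_eq_zero] at htx
      rw [htx, h2]
    refine ⟨x * (x * a), ?_, ?_, ?_, ?_⟩
    · -- a * (x*(x*a)) * a = a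
      calc a * (x * (x * a)) * a = a * x * x * a * a := by
            simp only [mul_assoc]
        _ = x * a * a := by rw [hax2]
        _ = a := hxaa
    · -- y * a * y = y
      calc x * (x * a) * a * (x * (x * a)) = x * (x * a * a) * (x * (x * a)) := by
            simp only [mul_assoc]
        _ = x * a * (x * (x * a)) := by rw [hxaa]
        _ = x * a * x * (x * a) := by simp only [mul_assoc]
        _ = x * (x * a) := by rw [h2]
    · -- a * y = y * a
      calc a * (x * (x * a)) = a * x * x * a := by simp only [mul_assoc]
        _ = x * a := by rw [hax2]
        _ = x * (x * a * a) := by rw [hxaa]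
        _ = x * (x * a) * a := by simp only [mul_assoc]
    · -- star (a*y) = a*y
      have : a * (x * (x * a)) = x * a := by
        calc a * (x * (x * a)) = a * x * x * a := by simp only [mul_assoc]
          _ = x * a := by rw [hax2]
      rw [this, he]
end

section
/- Let R be a unital ring with involution, let a ∈ R be EP with Moore-Penrose inverse d, and set p = a·d. Then the set { x ∈ R : a·x·a = a and x ∈ a·R } equals { d + p·y·(1 − p) : y ∈ R }. -/
theorem ep_inner_inverse_in_aR_set {R : Type*} [Ring R] [StarRing R] (a d : R)
    (hEP : IsEP a) (hMP : IsMoorePenroseInverse a d) :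
    {x : R | a * x * a = a ∧ ∃ r : R, x = a * r} =
      {x : R | ∃ y : R, x = d + (a * d) * y * (1 - a * d)} := by
  obtain ⟨z, hz1, hz2, hz3, hz4⟩ := hEP
  obtain ⟨h1, h2, h3, h4⟩ := hMP
  -- z is also a Moore-Penrose inverse, hence z = d
  have had : a * d = a * z := by
    have ha : star a = star a * (a * z) := by
      conv_lhs => rw [← hz1]
      rw [star_mul, hz4]
    calc a * d = star (a * d) := h3.symm
      _ = star d * star a := star_mul _ _
      _ = star d * (star a * (a * z)) := by rw [← ha]
      _ = star d * star a * (a * z) := by rw [mul_assoc]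
      _ = star (a * d) * (a * z) := by rw [star_mul]
      _ = a * d * (a * z) := by rw [h3]
      _ = a * d * a * z := by noncomm_ring
      _ = a * z := by rw [h1]
  have hza : z * a = d * a := by
    have ha : star a = d * a * star a := by
      conv_lhs => rw [← h1, mul_assoc]
      rw [star_mul, h4]
    calc z * a = star (z * a) := by rw [← hz3, hz4, hz3]
      _ = star a * star z := star_mul _ _
      _ = d * a * star a * star z := by rw [← ha]
      _ = d * a * (star a * star z) := by rw [mul_assoc]
      _ = d * a * star (z * a) := by rw [star_mul]
      _ = d * a * (z * a) := by rw [← hz3, hz4, hz3]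
      _ = d * (a * z * a) := by noncomm_ring
      _ = d * a := by rw [hz1]
  have hzd : z = d := by
    calc z = z * a * z := hz2.symm
      _ = z * (a * z) := by rw [mul_assoc]
      _ = z * (a * d) := by rw [← had]
      _ = z * a * d := by rw [mul_assoc]
      _ = d * a * d := by rw [hza]
      _ = d := h2
  have hc : a * d = d * a := by rw [← hzd]; exact hz3
  ext x
  simp only [Set.mem_setOf_eq]
  constructor
  · rintro ⟨hxa, r, rfl⟩
    refine ⟨a * r, ?_⟩
    have hpx : a * d * (a * r) = a * r := by
      rw [← mul_assoc, h1]
    have hd : a * r * (a * d) = d := by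
      have hdp : d = a * d * (a * r) * (a * d) := by
        calc d = d * a * d := h2.symm
          _ = d * (a * (a*r) * a) * d := by rw [hxa]
          _ = (d * a) * (a*r) * (a * d) := by noncomm_ring
          _ = (a * d) * (a*r) * (a * d) := by rw [hc]
      conv_lhs => rw [← hpx]
      exact hdp.symm
    calc a * r = d + (a * r - d) := by noncomm_ring
      _ = d + (a * d * (a * r) - a * r * (a * d)) := by rw [hpx, hd]
      _ = d + a * d * (a * r) * (1 - a * d) := by
          rw [hpx]; noncomm_ring
  · rintro ⟨y, rfl⟩
    constructor
    · have h0 : (1 - a * d) * a = 0 := by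
        simp [sub_mul, h1]
      calc a * (d + a * d * y * (1 - a * d)) * a
          = a * d * a + a * (a * d) * y * ((1 - a * d) * a) := by noncomm_ring
        _ = a := by rw [h0, h1]; noncomm_ring
    · refine ⟨d * d + d * y * (1 - a * d), ?_⟩
      have hdd : d = a * (d * d) := by
        calc d = d * a * d := h2.symm
          _ = a * d * d := by rw [← hc]
          _ = a * (d * d) := by rw [mul_assoc]
      calc d + a * d * y * (1 - a * d)
          = a * (d * d) + a * (d * y * (1 - a * d)) := by rw [← hdd]; noncomm_ring
        _ = a * (d * d + d * y * (1 - a * d)) := by rw [mul_add]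
end

section
/- Let R be a unital ring with involution and let a ∈ R. Then a is EP if and only if there exists x ∈ R such that a²·x = a, a·x = x·a and (a·x)* = a·x. -/
theorem ep_iff_three_equations' {R : Type*} [Ring R] [StarRing R] (a : R) :
    IsEP a ↔ ∃ x : R, a ^ 2 * x = a ∧ a * x = x * a ∧ star (a * x) = a * x := by
  constructor
  · rintro ⟨x, h1, h2, h3, h4⟩
    refine ⟨x, ?_, h3, h4⟩
    calc a ^ 2 * x = a * (a * x) := by noncomm_ring
      _ = a * (x * a) := by rw [h3]
      _ = a * x * a := by noncomm_ring
      _ = a := h1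
  · rintro ⟨x, h1, h3, h4⟩
    have haxa : a * x * a = a := by
      calc a * x * a = a * (x * a) := by noncomm_ring
        _ = a * (a * x) := by rw [h3]
        _ = a ^ 2 * x := by noncomm_ring
        _ = a := h1
    refine ⟨x * a * x, ?_, ?_, ?_, ?_⟩
    · calc a * (x * a * x) * a = (a * x * a) * (x * a) := by noncomm_ring
        _ = a * (x * a) := by rw [haxa]
        _ = a * x * a := by noncomm_ring
        _ = a := haxa
    · calc (x * a * x) * a * (x * a * x) = x * (a * x * a) * (x * a * x) := by noncomm_ring
        _ = x * a * (x * a * x) := by rw [haxa]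
        _ = x * (a * x * a) * x := by noncomm_ring
        _ = x * a * x := by rw [haxa]
    · calc a * (x * a * x) = (a * x) * (a * x) := by noncomm_ring
        _ = (x * a) * (x * a) := by rw [h3]
        _ = x * a * x * a := by noncomm_ring
    · calc star (a * (x * a * x)) = star ((a * x) * (a * x)) := by noncomm_ring
        _ = star (a * x) * star (a * x) := star_mul _ _
        _ = (a * x) * (a * x) := by rw [h4]
        _ = a * (x * a * x) := by noncomm_ring
end

section
/- Let R be a unital ring with involution, let a ∈ R be EP with Moore-Penrose inverse d, and set p = a·d. Then the set { x ∈ R : a²·x = a, a·x = x·a, (a·x)* = a·x } equals { d + (1 − p)·y·(1 − p) : y ∈ R }. -/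
theorem ep_solution_set_eq' {R : Type*} [Ring R] [StarRing R] (a d : R)
    (hEP : IsEP a) (hMP : IsMoorePenroseInverse a d) :
    {x : R | a ^ 2 * x = a ∧ a * x = x * a ∧ star (a * x) = a * x} =
      {x : R | ∃ y : R, x = d + (1 - a * d) * y * (1 - a * d)} := by
  obtain ⟨c, hc1, hc2, hc3, hc4⟩ := hEP
  obtain ⟨h1, h2, h3, h4⟩ := hMP
  -- uniqueness of the Moore-Penrose inverse: c = d
  have hac : a * c = a * d := by
    calc a * c = a * d * (a * c) := by rw [← mul_assoc, h1]
    _ = star (a * d) * star (a * c) := by rw [h3, hc4]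
    _ = star (a * c * (a * d)) := by rw [star_mul (a*c) (a*d)]
    _ = star (a * c * a * d) := by rw [mul_assoc (a*c)]
    _ = star (a * d) := by rw [hc1]
    _ = a * d := h3
  have hca : c * a = d * a := by
    calc c * a = c * a * (d * a) := by
          rw [mul_assoc, ← mul_assoc a d a, h1]
    _ = star (c * a) * star (d * a) := by
          rw [h4]
          have : star (c * a) = c * a := by rw [← hc3, hc4, hc3]
          rw [this]
    _ = star (d * a * (c * a)) := by rw [star_mul (d*a) (c*a)]
    _ = star (d * (a * c * a)) := by rw [mul_assoc d a, ← mul_assoc a c a]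
    _ = star (d * a) := by rw [hc1]
    _ = d * a := h4
  have hcd : c = d := by
    calc c = c * a * c := hc2.symm
    _ = c * (a * c) := by rw [mul_assoc]
    _ = c * (a * d) := by rw [hac]
    _ = c * a * d := by rw [mul_assoc]
    _ = d * a * d := by rw [hca]
    _ = d := h2
  have hcomm : a * d = d * a := by rw [← hcd]; exact hc3
  -- auxiliary identities
  have hap : a * (a * d) = a := by rw [hcomm, ← mul_assoc, h1]
  have hpa : (a * d) * a = a := h1
  have hdd : (a * d) * d = d := by rw [hcomm, h2]
  have hdp : d * (a * d) = d := by rw [← mul_assoc, h2]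
  ext x
  simp only [Set.mem_setOf_eq]
  constructor
  · rintro ⟨hx1, hx2, hx3⟩
    have hax : a * x = a * d := by
      calc a * x = d * a * a * x := by rw [← hcomm, h1]
      _ = d * (a ^ 2 * x) := by rw [sq]; noncomm_ring
      _ = d * a := by rw [hx1]
      _ = a * d := hcomm.symm
    have hpx : (a * d) * x = d := by
      rw [hcomm, mul_assoc, hax, ← mul_assoc, ← hcomm, hdd]
    have hxp : x * (a * d) = d := by
      rw [← mul_assoc, ← hx2, hax, hdd]
    refine ⟨x, ?_⟩
    have expand : (1 - a * d) * x * (1 - a * d)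
        = x - (a * d) * x - x * (a * d) + (a * d) * x * (a * d) := by
      noncomm_ring
    rw [expand, hpx, hxp, hdp]
    abel
  · rintro ⟨y, rfl⟩
    have h1p : a * (1 - a * d) = 0 := by rw [mul_sub, mul_one, hap, sub_self]
    have hp1 : (1 - a * d) * a = 0 := by rw [sub_mul, one_mul, hpa, sub_self]
    have key : a * (d + (1 - a * d) * y * (1 - a * d)) = a * d := by
      rw [mul_add, ← mul_assoc, ← mul_assoc, h1p, zero_mul, zero_mul, add_zero]
    have key' : (d + (1 - a * d) * y * (1 - a * d)) * a = d * a := by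
      rw [add_mul, mul_assoc, hp1, mul_zero, add_zero]
    refine ⟨?_, ?_, ?_⟩
    · rw [sq, mul_assoc, key, hap]
    · rw [key, key', hcomm]
    · rw [key, h3]
end

section
/- Let R be a unital ring with involution and let a ∈ R. Then a is EP if and only if the left annihilator of a² is contained in the left annihilator of a (for all t ∈ R, t·a² = 0 → t·a = 0) and there exists x ∈ R such that x·a² = a and (x·a)* = x·a. -/
theorem ep_iff_left_annihilator_and_eqs {R : Type*} [Ring R] [StarRing R] (a : R) :
    IsEP a ↔ (∀ t : R, t * a ^ 2 = 0 → t * a = 0) ∧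
      ∃ x : R, x * a ^ 2 = a ∧ star (x * a) = x * a := by
  constructor
  · rintro ⟨x, h1, h2, h3, h4⟩
    constructor
    · intro t ht
      have key : a = a ^ 2 * x := by
        conv_lhs => rw [← h1]
        rw [mul_assoc, ← h3, ← mul_assoc, ← pow_two]
      rw [key, ← mul_assoc, ht, zero_mul]
    · refine ⟨x, ?_, ?_⟩
      · rw [pow_two, ← mul_assoc, ← h3, h1]
      · rw [← h3, h4, h3]
  · rintro ⟨hann, x, hx, hs⟩
    have hF1 : a * x * a = a := by
      have e1 : (a * x - 1) * a ^ 2 = 0 := by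
        have : (a * x - 1) * a ^ 2 = a * (x * a ^ 2) - a ^ 2 := by noncomm_ring
        rw [this, hx, pow_two, sub_self]
      have e2 := hann _ e1
      have e3 : (a * x - 1) * a = a * x * a - a := by noncomm_ring
      rw [e3] at e2
      exact sub_eq_zero.mp e2
    have hF2 : a * x * x * a = x * a := by
      have e1 : (a * x * x - x) * a ^ 2 = 0 := by
        have : (a * x * x - x) * a ^ 2 = a * x * (x * a ^ 2) - x * a ^ 2 := by noncomm_ring
        rw [this, hx, hF1, sub_self]
      have e2 := hann _ e1
      have e3 : (a * x * x - x) * a = a * x * x * a - x * a := by noncomm_ring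
      rw [e3] at e2
      exact sub_eq_zero.mp e2
    set z := x * a * x * x * a with hz
    have za : z * a = x * a := by
      have s1 : z * a = x * a * x * (x * a ^ 2) := by rw [hz]; noncomm_ring
      rw [hx] at s1
      have s2 : x * a * x * a = x * (a * x * a) := by noncomm_ring
      rw [s1, s2, hF1]
    have az : a * z = x * a := by
      have s1 : a * z = a * x * a * x * x * a := by rw [hz]; noncomm_ring
      rw [s1, hF1, hF2]
    refine ⟨z, ?_, ?_, ?_, ?_⟩
    · rw [az, mul_assoc, ← pow_two, hx]
    · rw [za, hz]
      calc x * a * (x * a * x * x * a) = x * (a * x * a) * x * x * a := by noncomm_ring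
        _ = x * a * x * x * a := by rw [hF1]
    · rw [az, za]
    · rw [az, hs, ← az]
end

section
/- Let R be a unital ring with involution and let a ∈ R. Then a is core invertible if and only if there exists a projection p ∈ R (p² = p = p*) such that p·a = 0 and a·(1 − p) + p is invertible (a unit of R). Moreover, such a projection p is unique, namely p = 1 − a·x where x is the core inverse of a, and in that case (a·(1 − p) + p)⁻¹ = p + x. -/
def IsCoreInverse {R : Type*} [Ring R] [StarRing R] (a x : R) : Prop :=
  a * x * a = a ∧ x * a * x = x ∧ star (a * x) = a * x ∧ x * a ^ 2 = a ∧ a * x ^ 2 = x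

section aux

variable {R : Type*} [Ring R] [StarRing R]

/-- Uniqueness of the core inverse. -/
lemma coreInverse_unique {a x y : R} (hx : IsCoreInverse a x) (hy : IsCoreInverse a y) :
    x = y := by
  obtain ⟨hx1, hx2, hx3, hx4, hx5⟩ := hx
  obtain ⟨hy1, hy2, hy3, hy4, hy5⟩ := hy
  have key : a * x = a * x * (a * y) := by
    conv_lhs => rw [← hx3, ← hy1]
    calc star (a * y * a * x) = star (a * y * (a * x)) := by rw [mul_assoc]
    _ = star (a * x) * star (a * y) := by rw [star_mul]
    _ = a * x * (a * y) := by rw [hx3, hy3]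
  have hxy : x = x * a * y := by
    calc x = x * a * x := hx2.symm
    _ = x * (a * x) := by rw [mul_assoc]
    _ = x * (a * x * (a * y)) := by rw [← key]
    _ = x * a * x * (a * y) := by noncomm_ring
    _ = x * (a * y) := by rw [hx2]
    _ = x * a * y := by rw [mul_assoc]
  calc x = x * a * y := hxy
  _ = x * a * (a * y ^ 2) := by rw [hy5]
  _ = x * a ^ 2 * y ^ 2 := by noncomm_ring
  _ = a * y ^ 2 := by rw [hx4]
  _ = y := hy5

/-- The forward product computation: with `p = 1 - a*x`,
`(a*(1-p)+p) * (p+x) = 1`. -/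
lemma fwd_mul {a x : R} (h : IsCoreInverse a x) :
    (a * (a * x) + (1 - a * x)) * ((1 - a * x) + x) = 1 := by
  obtain ⟨h1, h2, h3, h4, h5⟩ := h
  have e1 : a * x * (a * x) = a * x := by rw [← mul_assoc, h1]
  have e2 : a * (a * x) * (a * x) = a * (a * x) := by
    rw [mul_assoc a (a*x), e1]
  have e3 : a * (a * x) * x = a * x := by
    have : a * (a * (x * x)) = a * x := by
      rw [(sq x).symm, h5]
    calc a * (a * x) * x = a * (a * (x * x)) := by noncomm_ring
    _ = a * x := this
  have e4 : a * x * x = x := by rw [mul_assoc, (sq x).symm, h5]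
  calc (a * (a * x) + (1 - a * x)) * ((1 - a * x) + x)
      = a * (a * x) - a * (a * x) * (a * x) + a * (a * x) * x
        + (1 - a * x) - (a * x - a * x * (a * x)) + (x - a * x * x) := by noncomm_ring
  _ = 1 := by rw [e1, e2, e3, e4]; noncomm_ring

/-- The reverse product computation. -/
lemma bwd_mul {a x : R} (h : IsCoreInverse a x) :
    ((1 - a * x) + x) * (a * (a * x) + (1 - a * x)) = 1 := by
  obtain ⟨h1, h2, h3, h4, h5⟩ := h
  have e1 : a * x * (a * x) = a * x := by rw [← mul_assoc, h1]
  have e2 : a * x * (a * (a * x)) = a * (a * x) := by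
    calc a * x * (a * (a * x)) = a * (x * a ^ 2) * x := by noncomm_ring
    _ = a * a * x := by rw [h4]
    _ = a * (a * x) := by rw [mul_assoc]
  have e3 : x * (a * (a * x)) = a * x := by
    calc x * (a * (a * x)) = x * a ^ 2 * x := by noncomm_ring
    _ = a * x := by rw [h4]
  have e4 : x * (a * x) = x := by rw [← mul_assoc, h2]
  calc ((1 - a * x) + x) * (a * (a * x) + (1 - a * x))
      = a * (a * x) - a * x * (a * (a * x)) + x * (a * (a * x))
        + (1 - a * x) - (a * x - a * x * (a * x)) + (x - x * (a * x)) := by noncomm_ring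
  _ = 1 := by rw [e1, e2, e3, e4]; noncomm_ring

/-- Forward direction: `1 - a*x` is a suitable projection. -/
lemma proj_of_coreInverse {a x : R} (h : IsCoreInverse a x) :
    (1 - a * x) ^ 2 = 1 - a * x ∧ star (1 - a * x) = 1 - a * x ∧ (1 - a * x) * a = 0 ∧
      IsUnit (a * (1 - (1 - a * x)) + (1 - a * x)) := by
  obtain ⟨h1, h2, h3, h4, h5⟩ := h
  have e1 : a * x * (a * x) = a * x := by rw [← mul_assoc, h1]
  refine ⟨?_, ?_, ?_, ?_⟩
  · calc (1 - a * x) ^ 2 = 1 - a * x - (a * x - a * x * (a * x)) := by noncomm_ring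
    _ = 1 - a * x := by rw [e1]; noncomm_ring
  · rw [star_sub, star_one, h3]
  · calc (1 - a * x) * a = a - a * x * a := by noncomm_ring
    _ = 0 := by rw [h1]; noncomm_ring
  · rw [sub_sub_cancel]
    refine ⟨⟨a * (a * x) + (1 - a * x), (1 - a * x) + x, ?_, ?_⟩, rfl⟩
    · exact fwd_mul ⟨h1, h2, h3, h4, h5⟩
    · exact bwd_mul ⟨h1, h2, h3, h4, h5⟩

/-- Converse construction: given a suitable projection `p` with `w` a two-sided
inverse of `a*(1-p)+p`, the element `(1-p)*w` is a core inverse of `a`,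
and `a * ((1-p)*w) = 1 - p`. -/
lemma coreInverse_of_proj {a p w : R} (hp2 : p * p = p) (hps : star p = p)
    (hpa : p * a = 0) (huw : (a * (1 - p) + p) * w = 1) (hwu : w * (a * (1 - p) + p) = 1) :
    IsCoreInverse a ((1 - p) * w) ∧ a * ((1 - p) * w) = 1 - p := by
  have hqa : (1 - p) * a = a := by rw [sub_mul, one_mul, hpa, sub_zero]
  have hqq : (1 - p) * (1 - p) = 1 - p := by
    calc (1 - p) * (1 - p) = 1 - p - (p - p * p) := by noncomm_ring
    _ = 1 - p := by rw [hp2]; noncomm_ring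
  have hqp : (1 - p) * p = 0 := by
    calc (1 - p) * p = p - p * p := by noncomm_ring
    _ = 0 := by rw [hp2]; noncomm_ring
  have hup : (a * (1 - p) + p) * p = p := by
    calc (a * (1 - p) + p) * p = a * ((1 - p) * p) + p * p := by noncomm_ring
    _ = p := by rw [hqp, hp2, mul_zero, zero_add]
  have hwp : w * p = p := by
    calc w * p = w * ((a * (1 - p) + p) * p) := by rw [hup]
    _ = w * (a * (1 - p) + p) * p := by rw [mul_assoc]
    _ = p := by rw [hwu, one_mul]
  -- a * ((1-p) * w) = 1 - p
  have key : a * ((1 - p) * w) = 1 - p := by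
    have := huw
    calc a * ((1 - p) * w) = (a * (1 - p) + p) * w - p * w := by noncomm_ring
    _ = 1 - p * w := by rw [huw]
    _ = 1 - p := by
        have hpw : p * w = p := by
          have hpu : p * (a * (1 - p) + p) = p := by
            calc p * (a * (1 - p) + p) = p * a * (1 - p) + p * p := by noncomm_ring
            _ = p := by rw [hpa, hp2, zero_mul, zero_add]
          calc p * w = p * (a * (1 - p) + p) * w := by rw [hpu]
          _ = p * ((a * (1 - p) + p) * w) := by rw [mul_assoc]
          _ = p := by rw [huw, mul_one]
        rw [hpw]
  have hwu2 : w * (a * (1 - p)) = 1 - p := by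
    calc w * (a * (1 - p)) = w * (a * (1 - p) + p) - w * p := by noncomm_ring
    _ = 1 - p := by rw [hwu, hwp]
  refine ⟨⟨?_, ?_, ?_, ?_, ?_⟩, key⟩
  · rw [key, hqa]
  · rw [mul_assoc ((1 - p) * w) a ((1 - p) * w), key]
    calc (1 - p) * w * (1 - p) = (1 - p) * (w - w * p) := by noncomm_ring
    _ = (1 - p) * (w - p) := by rw [hwp]
    _ = (1 - p) * w - (1 - p) * p := by noncomm_ring
    _ = (1 - p) * w := by rw [hqp, sub_zero]
  · rw [key, star_sub, star_one, hps]
  · have haa : a * (1 - p) * a = a * a := by rw [mul_assoc, hqa]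
    calc (1 - p) * w * a ^ 2 = (1 - p) * w * (a * (1 - p) * a) := by rw [haa]; noncomm_ring
    _ = (1 - p) * (w * (a * (1 - p))) * a := by noncomm_ring
    _ = (1 - p) * (1 - p) * a := by rw [hwu2]
    _ = a := by rw [hqq, hqa]
  · calc a * ((1 - p) * w) ^ 2 = a * ((1 - p) * w) * ((1 - p) * w) := by noncomm_ring
    _ = (1 - p) * ((1 - p) * w) := by rw [key]
    _ = (1 - p) * (1 - p) * w := by rw [mul_assoc]
    _ = (1 - p) * w := by rw [hqq]

end aux

theorem core_invertible_iff_projection {R : Type*} [Ring R] [StarRing R] (a : R) :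
    ((∃ x : R, IsCoreInverse a x) ↔
      ∃ p : R, p ^ 2 = p ∧ star p = p ∧ p * a = 0 ∧ IsUnit (a * (1 - p) + p)) ∧
    (∀ x : R, IsCoreInverse a x →
      ∀ p : R, (p ^ 2 = p ∧ star p = p ∧ p * a = 0 ∧ IsUnit (a * (1 - p) + p)) →
        p = 1 - a * x ∧ (a * (1 - p) + p) * (p + x) = 1 ∧ (p + x) * (a * (1 - p) + p) = 1) := by
  constructor
  · constructor
    · rintro ⟨x, hx⟩
      obtain ⟨h1, h2, h3, h4⟩ := proj_of_coreInverse hx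
      exact ⟨1 - a * x, by rw [h1], h2, h3, h4⟩
    · rintro ⟨p, hp2, hps, hpa, hu⟩
      obtain ⟨u, hu⟩ := hu
      have huw : (a * (1 - p) + p) * ↑u⁻¹ = 1 := by rw [← hu]; exact u.mul_inv
      have hwu : (↑u⁻¹ : R) * (a * (1 - p) + p) = 1 := by rw [← hu]; exact u.inv_mul
      obtain ⟨hc, _⟩ := coreInverse_of_proj (by rw [← sq]; exact hp2) hps hpa huw hwu
      exact ⟨_, hc⟩
  · intro x hx p ⟨hp2, hps, hpa, hu⟩
    obtain ⟨u, hu⟩ := hu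
    have huw : (a * (1 - p) + p) * ↑u⁻¹ = 1 := by rw [← hu]; exact u.mul_inv
    have hwu : (↑u⁻¹ : R) * (a * (1 - p) + p) = 1 := by rw [← hu]; exact u.inv_mul
    obtain ⟨hc, hkey⟩ := coreInverse_of_proj (by rw [← sq]; exact hp2) hps hpa huw hwu
    have hxx : x = (1 - p) * ↑u⁻¹ := coreInverse_unique hx hc
    have hpx : p = 1 - a * x := by rw [hxx, hkey, sub_sub_cancel]
    have h1p : 1 - p = a * x := by rw [hpx, sub_sub_cancel]
    refine ⟨hpx, ?_, ?_⟩
    · rw [h1p, hpx]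
      exact fwd_mul hx
    · rw [h1p, hpx]
      exact bwd_mul hx
end

section
/- Let R be a unital ring with involution and let a ∈ R. Then a is EP if and only if there exists x ∈ R such that x is a core inverse of a and a is a core inverse of x (i.e., the core inverse of the core inverse of a equals a). -/
theorem ep_iff_core_inverse_involutive {R : Type*} [Ring R] [StarRing R] (a : R) :
    IsEP a ↔ ∃ x : R, IsCoreInverse a x ∧ IsCoreInverse x a := by
  constructor
  · rintro ⟨x, h1, h2, h3, h4⟩
    refine ⟨x, ⟨h1, h2, h4, ?_, ?_⟩, ⟨h2, h1, ?_, ?_, ?_⟩⟩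
    · rw [sq, ← mul_assoc, ← h3]; exact h1
    · rw [sq, ← mul_assoc, h3]; exact h2
    · rw [← h3]; exact h4
    · rw [sq, ← mul_assoc, h3]; exact h2
    · rw [sq, ← mul_assoc, ← h3]; exact h1
  · rintro ⟨x, ⟨h1, h2, h3, h4, h5⟩, ⟨g1, g2, g3, g4, g5⟩⟩
    have e1 : (x * a) * (a * x) = a * x := by
      calc (x * a) * (a * x) = (x * a ^ 2) * x := by rw [sq]; noncomm_ring
        _ = a * x := by rw [h4]
    have e2 : (a * x) * (x * a) = x * a := by
      calc (a * x) * (x * a) = (a * x ^ 2) * a := by rw [sq]; noncomm_ring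
        _ = x * a := by rw [h5]
    have key : a * x = x * a := by
      calc a * x = star (a * x) := h3.symm
        _ = star ((x * a) * (a * x)) := by rw [e1]
        _ = star (a * x) * star (x * a) := by rw [star_mul]
        _ = (a * x) * (x * a) := by rw [h3, g3]
        _ = x * a := e2
    exact ⟨x, h1, h2, key, h3⟩
end

section
/- Let R be a unital ring with involution and let a ∈ R. The following are equivalent: (1) a is EP; (2) a is group invertible and a ∈ a*·R (there exists r with a = a*·r); (3) a is group invertible and a ∈ R·a* (there exists r with a = r·a*); (4) a is group invertible and a* ∈ a·R; (5) a is group invertible and a* ∈ R·a. -/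
def IsGroupInvertible {R : Type*} [Ring R] (a : R) : Prop :=
  ∃ x : R, a * x * a = a ∧ x * a * x = x ∧ a * x = x * a

private lemma sa_left {R : Type*} [Ring R] [StarRing R] {p : R}
    (h : star p * p = p) : star p = p := by
  have h2 := congrArg star h
  rw [star_mul, star_star] at h2
  exact h2.symm.trans h

private lemma sa_right {R : Type*} [Ring R] [StarRing R] {p : R}
    (h : p * star p = p) : star p = p := by
  have h2 := congrArg star h
  rw [star_mul, star_star] at h2
  exact h2.symm.trans h

theorem ep_tfae_group_invertible {R : Type*} [Ring R] [StarRing R] (a : R) :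
    List.TFAE
      [IsEP a,
       IsGroupInvertible a ∧ ∃ r : R, a = star a * r,
       IsGroupInvertible a ∧ ∃ r : R, a = r * star a,
       IsGroupInvertible a ∧ ∃ r : R, star a = a * r,
       IsGroupInvertible a ∧ ∃ r : R, star a = r * a] := by
  tfae_have 1 → 2 := by
    rintro ⟨x, h1, h2, h3, h4⟩
    refine ⟨⟨x, h1, h2, h3⟩, star x * a, ?_⟩
    rw [← mul_assoc, ← star_mul, ← h3, h4, h1]
  tfae_have 1 → 3 := by
    rintro ⟨x, h1, h2, h3, h4⟩
    refine ⟨⟨x, h1, h2, h3⟩, a * star x, ?_⟩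
    rw [mul_assoc, ← star_mul, h4, h3, ← mul_assoc, h1]
  tfae_have 2 → 1 := by
    rintro ⟨⟨x, h1, h2, h3⟩, r, hr⟩
    refine ⟨x, h1, h2, h3, ?_⟩
    have ha : star a = star r * a := by
      conv_lhs => rw [hr]
      rw [star_mul, star_star]
    have haax : a * (a * x) = a := by rw [h3, ← mul_assoc, h1]
    have key : star a * (a * x) = star a := by
      calc star a * (a * x) = star r * a * (a * x) := by rw [← ha]
        _ = star r * (a * (a * x)) := by rw [mul_assoc]
        _ = star r * a := by rw [haax]
        _ = star a := ha.symm
    have key2 := congrArg star key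
    rw [star_mul, star_star] at key2
    have pp : star (a * x) * (a * x) = a * x := by
      rw [← mul_assoc, key2]
    exact sa_left pp
  tfae_have 3 → 1 := by
    rintro ⟨⟨x, h1, h2, h3⟩, r, hr⟩
    refine ⟨x, h1, h2, h3, ?_⟩
    have ha : star a = a * star r := by
      conv_lhs => rw [hr]
      rw [star_mul, star_star]
    have key : a * x * star a = star a := by
      calc a * x * star a = a * x * (a * star r) := by rw [← ha]
        _ = a * x * a * star r := by rw [← mul_assoc]
        _ = a * star r := by rw [h1]
        _ = star a := ha.symm
    have key2 := congrArg star key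
    rw [star_mul, star_star] at key2
    have pp : a * x * star (a * x) = a * x := by
      nth_rewrite 1 [h3]
      rw [mul_assoc, key2, h3]
    exact sa_right pp
  tfae_have 2 → 5 := by
    rintro ⟨hg, r, hr⟩
    refine ⟨hg, star r, ?_⟩
    conv_lhs => rw [hr]
    rw [star_mul, star_star]
  tfae_have 5 → 2 := by
    rintro ⟨hg, r, hr⟩
    refine ⟨hg, star r, ?_⟩
    have h := congrArg star hr
    rw [star_star, star_mul] at h
    exact h
  tfae_have 3 → 4 := by
    rintro ⟨hg, r, hr⟩
    refine ⟨hg, star r, ?_⟩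
    have h := congrArg star hr
    rw [star_mul, star_star] at h
    exact h
  tfae_have 4 → 3 := by
    rintro ⟨hg, r, hr⟩
    refine ⟨hg, star r, ?_⟩
    have h := congrArg star hr
    rw [star_star, star_mul] at h
    exact h
  tfae_finish
end

section
/- Let R be a unital ring with involution and let a ∈ R. The following are equivalent: (1) a is EP; (2) a is core invertible and a ∈ a*·R (there exists r with a = a*·r); (3) a is core invertible and a ∈ R·a* (there exists r with a = r·a*); (4) a is core invertible and a* ∈ a·R; (5) a is core invertible and a* ∈ R·a. -/
private lemma ep_of_left {R : Type*} [Ring R] [StarRing R] {a x r : R}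
    (h1 : a * x * a = a) (h2 : x * a * x = x) (h3 : star (a * x) = a * x)
    (h4 : x * a ^ 2 = a) (h5 : a * x ^ 2 = x) (hr : a = star a * r) : IsEP a := by
  rw [pow_two] at h4 h5
  have eqA : star a = star a * star x * star a := by
    calc star a = star (a * x * a) := by rw [h1]
    _ = star a * star (a * x) := by rw [star_mul]
    _ = star a * (star x * star a) := by rw [star_mul]
    _ = star a * star x * star a := by noncomm_ring
  have eq1 : a = star a * star x * a := by
    calc a = star a * r := hr
    _ = (star a * star x * star a) * r := by rw [← eqA]
    _ = star a * star x * (star a * r) := by noncomm_ring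
    _ = star a * star x * a := by rw [← hr]
  have eq2 : a * (x * x * a) = x * a := by
    calc a * (x * x * a) = (a * (x * x)) * a := by noncomm_ring
    _ = x * a := by rw [h5]
  have hpp : star (x * a) * (x * a) = x * a := by
    calc star (x * a) * (x * a) = (star a * star x) * (x * a) := by rw [star_mul]
    _ = star a * star x * (a * (x * x * a)) := by rw [eq2]
    _ = (star a * star x * a) * (x * x * a) := by noncomm_ring
    _ = a * (x * x * a) := by rw [← eq1]
    _ = x * a := eq2
  have hps : star (x * a) = x * a := by
    calc star (x * a) = star (star (x * a) * (x * a)) := by rw [hpp]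
    _ = star (x * a) * star (star (x * a)) := by rw [star_mul]
    _ = star (x * a) * (x * a) := by rw [star_star]
    _ = x * a := hpp
  refine ⟨x * x * a, ?_, ?_, ?_, ?_⟩
  · calc a * (x * x * a) * a = (x * a) * a := by rw [eq2]
    _ = x * (a * a) := by noncomm_ring
    _ = a := h4
  · calc (x * x * a) * a * (x * x * a) = (x * (x * (a * a))) * (x * x * a) := by noncomm_ring
    _ = (x * a) * (x * x * a) := by rw [show x * (a * a) = a from h4]
    _ = (x * a * x) * (x * a) := by noncomm_ring
    _ = x * (x * a) := by rw [h2]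
    _ = x * x * a := by noncomm_ring
  · calc a * (x * x * a) = x * a := eq2
    _ = x * (x * (a * a)) := by rw [show x * (a * a) = a from h4]
    _ = (x * x * a) * a := by noncomm_ring
  · rw [eq2, hps]

private lemma ep_of_right {R : Type*} [Ring R] [StarRing R] {a x r : R}
    (h1 : a * x * a = a) (h2 : x * a * x = x) (h3 : star (a * x) = a * x)
    (h4 : x * a ^ 2 = a) (h5 : a * x ^ 2 = x) (hr : a = r * star a) : IsEP a := by
  rw [pow_two] at h4
  have eqB : star a = star a * (a * x) := by
    calc star a = star (a * x * a) := by rw [h1]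
    _ = star a * star (a * x) := by rw [star_mul]
    _ = star a * (a * x) := by rw [h3]
  have eqC : a = a * (a * x) := by
    calc a = r * star a := hr
    _ = r * (star a * (a * x)) := by rw [← eqB]
    _ = (r * star a) * (a * x) := by noncomm_ring
    _ = a * (a * x) := by rw [← hr]
  have comm : x * a = a * x := by
    calc x * a = x * (a * (a * x)) := by rw [← eqC]
    _ = (x * (a * a)) * x := by noncomm_ring
    _ = a * x := by rw [h4]
  exact ⟨x, h1, h2, comm.symm, h3⟩

theorem ep_tfae_core_invertible {R : Type*} [Ring R] [StarRing R] (a : R) :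
    List.TFAE
      [IsEP a,
       (∃ x : R, IsCoreInverse a x) ∧ ∃ r : R, a = star a * r,
       (∃ x : R, IsCoreInverse a x) ∧ ∃ r : R, a = r * star a,
       (∃ x : R, IsCoreInverse a x) ∧ ∃ r : R, star a = a * r,
       (∃ x : R, IsCoreInverse a x) ∧ ∃ r : R, star a = r * a] := by
  tfae_have 1 → 2 := by
    rintro ⟨x, e1, e2, e3, e4⟩
    have c4 : x * a ^ 2 = a := by
      rw [pow_two]
      calc x * (a * a) = (x * a) * a := by noncomm_ring
      _ = (a * x) * a := by rw [← e3]
      _ = a := e1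
    have c5 : a * x ^ 2 = x := by
      rw [pow_two]
      calc a * (x * x) = (a * x) * x := by noncomm_ring
      _ = (x * a) * x := by rw [e3]
      _ = x := e2
    refine ⟨⟨x, e1, e2, e4, c4, c5⟩, ⟨star x * a, ?_⟩⟩
    calc a = a * x * a := e1.symm
    _ = star (a * x) * a := by rw [e4]
    _ = star (x * a) * a := by rw [e3]
    _ = (star a * star x) * a := by rw [star_mul]
    _ = star a * (star x * a) := by noncomm_ring
  tfae_have 1 → 3 := by
    rintro ⟨x, e1, e2, e3, e4⟩
    have c4 : x * a ^ 2 = a := by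
      rw [pow_two]
      calc x * (a * a) = (x * a) * a := by noncomm_ring
      _ = (a * x) * a := by rw [← e3]
      _ = a := e1
    have c5 : a * x ^ 2 = x := by
      rw [pow_two]
      calc a * (x * x) = (a * x) * x := by noncomm_ring
      _ = (x * a) * x := by rw [e3]
      _ = x := e2
    refine ⟨⟨x, e1, e2, e4, c4, c5⟩, ⟨a * star x, ?_⟩⟩
    calc a = a * x * a := e1.symm
    _ = a * (x * a) := by noncomm_ring
    _ = a * (a * x) := by rw [← e3]
    _ = a * star (a * x) := by rw [e4]
    _ = a * (star x * star a) := by rw [star_mul]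
    _ = (a * star x) * star a := by noncomm_ring
  tfae_have 2 → 1 := by
    rintro ⟨⟨x, h1, h2, h3, h4, h5⟩, ⟨r, hr⟩⟩
    exact ep_of_left h1 h2 h3 h4 h5 hr
  tfae_have 3 → 1 := by
    rintro ⟨⟨x, h1, h2, h3, h4, h5⟩, ⟨r, hr⟩⟩
    exact ep_of_right h1 h2 h3 h4 h5 hr
  tfae_have 3 → 4 := by
    rintro ⟨hc, ⟨r, hr⟩⟩
    refine ⟨hc, ⟨star r, ?_⟩⟩
    calc star a = star (r * star a) := by rw [← hr]
    _ = star (star a) * star r := by rw [star_mul]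
    _ = a * star r := by rw [star_star]
  tfae_have 4 → 3 := by
    rintro ⟨hc, ⟨r, hr⟩⟩
    refine ⟨hc, ⟨star r, ?_⟩⟩
    calc a = star (star a) := (star_star a).symm
    _ = star (a * r) := by rw [← hr]
    _ = star r * star a := by rw [star_mul]
  tfae_have 2 → 5 := by
    rintro ⟨hc, ⟨r, hr⟩⟩
    refine ⟨hc, ⟨star r, ?_⟩⟩
    calc star a = star (star a * r) := by rw [← hr]
    _ = star r * star (star a) := by rw [star_mul]
    _ = star r * a := by rw [star_star]
  tfae_have 5 → 2 := by
    rintro ⟨hc, ⟨r, hr⟩⟩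
    refine ⟨hc, ⟨star r, ?_⟩⟩
    calc a = star (star a) := (star_star a).symm
    _ = star (r * a) := by rw [← hr]
    _ = star a * star r := by rw [star_mul]
  tfae_finish
end

section
/- Let R be a unital ring with involution, let a ∈ R be core invertible with core inverse x. Then a is EP if and only if x commutes with (x·a)*·a, i.e., x·((x·a)*·a) = ((x·a)*·a)·x. -/
theorem ep_iff_core_inverse_commutes {R : Type*} [Ring R] [StarRing R] (a x : R)
    (hx : IsCoreInverse a x) :
    IsEP a ↔ x * (star (x * a) * a) = (star (x * a) * a) * x := by
  obtain ⟨h1, h2, h3, h4, h5⟩ := hx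
  rw [pow_two] at h4 h5
  constructor
  · rintro ⟨y, e1, e2, e3, e4⟩
    have k1 : a * y * (a * x) = a * x := by
      calc a * y * (a * x) = a * y * a * x := (mul_assoc (a*y) a x).symm
        _ = a * x := by rw [e1]
    have k2 : a * x * (a * y) = a * y := by
      calc a * x * (a * y) = a * x * a * y := (mul_assoc (a*x) a y).symm
        _ = a * y := by rw [h1]
    have k3 : a * y * (a * x) = a * y := by
      have := congrArg star k2
      rwa [star_mul, e4, h3] at this
    have hxy : a * x = a * y := by rw [← k1, k3]
    have hxy2 : x = y := by
      calc x = a * (x * x) := h5.symm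
        _ = a * x * x := by rw [mul_assoc]
        _ = a * y * x := by rw [hxy]
        _ = y * a * x := by rw [e3]
        _ = y * (a * x) := by rw [mul_assoc]
        _ = y * (a * y) := by rw [hxy]
        _ = y * a * y := by rw [← mul_assoc]
        _ = y := e2
    have comm : a * x = x * a := by rw [hxy2]; exact e3
    rw [← comm, h3, h1]
    exact comm.symm
  · intro h
    set t := star (x * a) with ht
    have hst : star t = x * a := by rw [ht, star_star]
    have stA : x * (t * a) = t * (x * a) := by
      calc x * (t * a) = x * (t * (a * x * a)) := by rw [h1]
        _ = x * (t * a) * (x * a) := by simp only [mul_assoc]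
        _ = t * a * x * (x * a) := by rw [h]
        _ = t * (a * (x * x)) * a := by simp only [mul_assoc]
        _ = t * x * a := by rw [h5]
        _ = t * (x * a) := by rw [mul_assoc]
    have eq2 : t * (a * x) = t * (x * a) := by
      calc t * (a * x) = t * a * x := (mul_assoc t a x).symm
        _ = x * (t * a) := h.symm
        _ = t * (x * a) := stA
    have eq3 : x * a = t * (x * a) := by
      have hs := congrArg star eq2
      rw [star_mul, h3, star_mul, hst, ← ht] at hs
      calc x * a = a * (x * x) * a := by rw [h5]
        _ = a * x * (x * a) := by simp only [mul_assoc]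
        _ = t * (x * a) := hs
    have ta : t * a = a := by
      calc t * a = t * (x * (a * a)) := by rw [h4]
        _ = t * (x * a) * a := by simp only [mul_assoc]
        _ = x * a * a := by rw [← eq3]
        _ = a := by rw [mul_assoc, h4]
    rw [ta] at h
    exact ⟨x, h1, h2, h.symm, h3⟩
end

section
/- Let R be a unital ring with involution and let a ∈ R be core invertible with core inverse x. The following are equivalent: (1) a is EP; (2) there exists a unit u ∈ R such that x = u·a; (3) there exists an element b ∈ R such that x = b·a. -/
theorem ep_tfae_core_inverse_unit {R : Type*} [Ring R] [StarRing R] (a x : R)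
    (hx : IsCoreInverse a x) :
    List.TFAE
      [IsEP a,
       ∃ u : R, IsUnit u ∧ x = u * a,
       ∃ b : R, x = b * a] := by
  obtain ⟨h1, h2, h3, h4, h5⟩ := hx
  have h4' : x * (a * a) = a := by rw [← pow_two]; exact h4
  have h5' : a * (x * x) = x := by rw [← pow_two]; exact h5
  tfae_have 3 → 1 := by
    rintro ⟨b, hb⟩
    have hxxa : x * (x * a) = x := by
      calc x * (x * a) = b * (a * x * a) := by rw [hb]; noncomm_ring
        _ = b * a := by rw [h1]
        _ = x := hb.symm
    have hcomm : a * x = x * a := by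
      calc a * x = a * (x * (x * a)) := by rw [hxxa]
        _ = a * (x * x) * a := by noncomm_ring
        _ = x * a := by rw [h5']
    exact ⟨x, h1, h2, hcomm, h3⟩
  tfae_have 1 → 2 := by
    rintro ⟨y, hy1, hy2, hy3, hy4⟩
    -- star a absorbs a*x and a*y on the right
    have hsx : star a = star a * (a * x) := by
      conv_lhs => rw [← h1]
      rw [star_mul, h3]
    have hsy : star a = star a * (a * y) := by
      conv_lhs => rw [← hy1]
      rw [star_mul, hy4]
    have huv : a * x = (a * x) * (a * y) := by
      conv_lhs => rw [← h3, star_mul, hsy]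
      rw [← mul_assoc, ← star_mul, h3]
    have hvu : a * y = (a * y) * (a * x) := by
      conv_lhs => rw [← hy4, star_mul, hsx]
      rw [← mul_assoc, ← star_mul, hy4]
    have haxay : a * x = a * y := by
      have h' : a * x = (a * y) * (a * x) := by
        conv_lhs => rw [← h3, huv, star_mul, h3, hy4]
      rw [h', ← hvu]
    have hy5' : a * (y * y) = y := by
      calc a * (y * y) = (a * y) * y := by noncomm_ring
        _ = (y * a) * y := by rw [hy3]
        _ = y := hy2
    have hy4' : y * (a * a) = a := by
      calc y * (a * a) = (y * a) * a := by noncomm_ring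
        _ = (a * y) * a := by rw [← hy3]
        _ = a := hy1
    have e1 : x * (a * y) = x := by
      rw [← haxay, ← mul_assoc]; exact h2
    have e2 : y * (a * y) = y := by rw [← mul_assoc]; exact hy2
    have e3 : (x - y) * (a * a) = 0 := by rw [sub_mul, h4', hy4', sub_self]
    have hay : a * y = a * a * (y * y) := by
      conv_lhs => rw [← hy5']
      noncomm_ring
    have hsub : x - y = 0 := by
      have e4 : x - y = ((x - y) * (a * a)) * (y * y) := by
        calc x - y = (x - y) * (a * y) := by rw [sub_mul, e1, e2]
          _ = ((x - y) * (a * a)) * (y * y) := by rw [hay]; noncomm_ring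
      rw [e3, zero_mul] at e4
      exact e4
    have hxy : x = y := sub_eq_zero.mp hsub
    subst hxy
    -- now a * x = x * a (hy3), build the unit
    have hcomm : a * x = x * a := hy3
    have hxe : x * (a * x) = x := by rw [← mul_assoc]; exact h2
    have hex : (a * x) * x = x := by rw [mul_assoc]; exact h5'
    have hea : (a * x) * a = a := h1
    have hae : a * (a * x) = a := by
      rw [hcomm, ← mul_assoc]; exact h1
    have hee : (a * x) * (a * x) = a * x := by
      calc (a * x) * (a * x) = a * (x * (a * x)) := by noncomm_ring
        _ = a * x := by rw [hxe]
    have hxa : x * a = a * x := hcomm.symm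
    have hvw : (x + 1 - a * x) * (a + 1 - a * x) = 1 := by
      simp only [mul_add, add_mul, mul_sub, sub_mul, mul_one, one_mul]
      rw [hxa, hxe, hea, hee]
      abel
    have hwv : (a + 1 - a * x) * (x + 1 - a * x) = 1 := by
      simp only [mul_add, add_mul, mul_sub, sub_mul, mul_one, one_mul]
      rw [hae, hee, hex]
      abel
    have hv : IsUnit (x + 1 - a * x) := ⟨⟨_, _, hvw, hwv⟩, rfl⟩
    refine ⟨(x + 1 - a * x) * (x + 1 - a * x), hv.mul hv, ?_⟩
    have hxxa : x * (x * a) = x := by rw [hxa, ← mul_assoc]; exact h2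
    have : (x + 1 - a * x) * (x + 1 - a * x) * a = x := by
      simp only [mul_add, add_mul, mul_sub, sub_mul, mul_one, one_mul]
      rw [hex, hxe, hee, hea, mul_assoc x x a, hxxa]
      abel
    exact this.symm
  tfae_have 2 → 3 := by
    rintro ⟨u, _, h⟩; exact ⟨u, h⟩
  tfae_finish
end

section
/- Let R be a unital ring with involution, let a ∈ R be EP, and let x be the core inverse of a. Then the set { y ∈ R : x = y·a } equals { x² + w·(1 − a·x) : w ∈ R }. -/
theorem ep_core_inverse_solution_set {R : Type*} [Ring R] [StarRing R] (a x : R)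
    (hEP : IsEP a) (hx : IsCoreInverse a x) :
    {y : R | x = y * a} = {y : R | ∃ w : R, y = x ^ 2 + w * (1 - a * x)} := by
  obtain ⟨z, hz1, hz2, hz3, hz4⟩ := hEP
  obtain ⟨h1, h2, h3, h4, h5⟩ := hx
  have key : (a * z) * (a * x) = a * x := by
    rw [show a * z * (a * x) = a * z * a * x by noncomm_ring, hz1]
  have hax : a * x = a * z := by
    have e1 : a * x = (a * x) * (a * z) := by
      calc a * x = star (a * x) := h3.symm
        _ = star ((a * z) * (a * x)) := by rw [key]
        _ = star (a * x) * star (a * z) := by rw [star_mul]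
        _ = (a * x) * (a * z) := by rw [h3, hz4]
    rw [e1, show (a * x) * (a * z) = (a * x * a) * z by noncomm_ring, h1]
  have hzx : z = x := by
    have e2 : z * (a * x) = z := by
      rw [hax, show z * (a * z) = z * a * z by noncomm_ring, hz2]
    calc z = z * (a * x) := e2.symm
      _ = (z * a) * x := by noncomm_ring
      _ = (a * z) * x := by rw [← hz3]
      _ = (a * x) * x := by rw [hax]
      _ = a * x ^ 2 := by noncomm_ring
      _ = x := h5
  have hxa : x * a = a * x := by
    have := hz3; rw [hzx] at this; exact this.symm
  have hx2a : x ^ 2 * a = x := by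
    calc x ^ 2 * a = x * (x * a) := by noncomm_ring
      _ = x * (a * x) := by rw [hxa]
      _ = x * a * x := by noncomm_ring
      _ = x := h2
  ext y
  simp only [Set.mem_setOf_eq]
  constructor
  · intro h
    refine ⟨y, ?_⟩
    have hy : y * (a * x) = x ^ 2 := by
      rw [← mul_assoc, ← h]; noncomm_ring
    calc y = x ^ 2 + (y - y * (a * x)) := by rw [hy]; abel
      _ = x ^ 2 + y * (1 - a * x) := by noncomm_ring
  · rintro ⟨w, rfl⟩
    have h0 : (1 - a * x) * a = 0 := by
      rw [sub_mul, one_mul, h1, sub_self]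
    calc x = x ^ 2 * a := hx2a.symm
      _ = x ^ 2 * a + w * ((1 - a * x) * a) := by rw [h0, mul_zero, add_zero]
      _ = (x ^ 2 + w * (1 - a * x)) * a := by noncomm_ring
end

section
/- Let R be a unital ring with involution, let a ∈ R and let n be a positive integer. Then a is EP if and only if a is Moore-Penrose invertible with Moore-Penrose inverse d, a is group invertible, and (aⁿ·d)·(d·aⁿ) = (d·aⁿ)·(aⁿ·d) (i.e., a is n-EP). -/
theorem ep_iff_n_ep {R : Type*} [Ring R] [StarRing R] (a : R) (n : ℕ) (hn : 0 < n) :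
    IsEP a ↔ ∃ d : R, IsMoorePenroseInverse a d ∧ IsGroupInvertible a ∧
      (a ^ n * d) * (d * a ^ n) = (d * a ^ n) * (a ^ n * d) := by
  constructor
  · rintro ⟨x, e1, e2, e3, e4⟩
    refine ⟨x, ⟨e1, e2, e4, ?_⟩, ⟨x, e1, e2, e3⟩, ?_⟩
    · rw [← e3]; exact e4
    · have hcx : Commute a x := e3
      have hx : a ^ n * x = x * a ^ n := hcx.pow_left n
      rw [hx]
  · rintro ⟨d, ⟨h1, h2, h3, h4⟩, ⟨g, hg1, hg2, hg3⟩, hC⟩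
    -- right-associated forms
    have h1' : a * (d * a) = a := by rw [← mul_assoc, h1]
    have hg1' : a * (g * a) = a := by rw [← mul_assoc, hg1]
    have hQ : a * (a * g) = a := by rw [hg3, hg1']
    -- absorption lemmas
    have A1 : ∀ k, 0 < k → a * (d * a ^ k) = a ^ k := by
      rintro k hk
      obtain ⟨j, rfl⟩ : ∃ j, k = j + 1 := ⟨k - 1, (Nat.succ_pred_eq_of_pos hk).symm⟩
      rw [pow_succ', ← mul_assoc, ← mul_assoc, h1]
    have A2 : ∀ k, 0 < k → a ^ k * (d * a) = a ^ k := by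
      rintro k hk
      obtain ⟨j, rfl⟩ : ∃ j, k = j + 1 := ⟨k - 1, (Nat.succ_pred_eq_of_pos hk).symm⟩
      rw [pow_succ, mul_assoc, h1']
    have P3 : ∀ k, 0 < k → a ^ k * (a * g) = a ^ k := by
      rintro k hk
      obtain ⟨j, rfl⟩ : ∃ j, k = j + 1 := ⟨k - 1, (Nat.succ_pred_eq_of_pos hk).symm⟩
      rw [pow_succ, mul_assoc, hQ]
    have P3L : ∀ k, 0 < k → (a * g) * a ^ k = a ^ k := by
      rintro k hk
      obtain ⟨j, rfl⟩ : ∃ j, k = j + 1 := ⟨k - 1, (Nat.succ_pred_eq_of_pos hk).symm⟩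
      rw [pow_succ', ← mul_assoc, hg1]
    -- power lemmas about g
    have hIdem : IsIdempotentElem (a * g) := by
      show (a * g) * (a * g) = a * g
      rw [← mul_assoc, hg1]
    have hcom : Commute a g := hg3
    have P1 : a ^ n * g ^ n = a * g := by
      obtain ⟨j, rfl⟩ : ∃ j, n = j + 1 := ⟨n - 1, (Nat.succ_pred_eq_of_pos hn).symm⟩
      rw [← Commute.mul_pow hcom, hIdem.pow_succ_eq]
    have P2 : g ^ n * a ^ n = a * g := by
      obtain ⟨j, rfl⟩ : ∃ j, n = j + 1 := ⟨n - 1, (Nat.succ_pred_eq_of_pos hn).symm⟩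
      rw [← Commute.mul_pow hcom.symm, ← hg3, hIdem.pow_succ_eq]
    have P4 : a ^ (n + 1) * g ^ n = a := by
      rw [pow_succ', mul_assoc, P1, hQ]
    have P5 : g ^ n * a ^ (n + 1) = a := by
      rw [pow_succ, ← mul_assoc, P2, hg1]
    -- main derivation
    have S1 : a * (d * (d * a ^ n)) = a ^ n * d := by
      have hpos2 : 0 < n + n := by omega
      calc a * (d * (d * a ^ n))
          = g ^ n * (a ^ (n + 1) * (d * (d * a ^ n))) := by
            conv_rhs => rw [← mul_assoc, P5]
        _ = g ^ n * (a * ((a ^ n * d) * (d * a ^ n))) := by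
            rw [pow_succ']; simp only [mul_assoc]
        _ = g ^ n * (a * ((d * a ^ n) * (a ^ n * d))) := by rw [hC]
        _ = g ^ n * ((a * (d * a ^ (n + n))) * d) := by
            rw [pow_add]; simp only [mul_assoc]
        _ = g ^ n * (a ^ (n + n) * d) := by rw [A1 _ hpos2]
        _ = (g ^ n * a ^ n) * (a ^ n * d) := by
            rw [pow_add]; simp only [mul_assoc]
        _ = (a * g) * (a ^ n * d) := by rw [P2]
        _ = a ^ n * d := by rw [← mul_assoc, P3L n hn]
    have S2 : a ^ n * (d * (d * a)) = d * a ^ n := by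
      calc a ^ n * (d * (d * a))
          = a ^ n * (d * (d * (a ^ (n + 1) * g ^ n))) := by rw [P4]
        _ = ((a ^ n * d) * (d * a ^ n)) * (a * g ^ n) := by
            rw [pow_succ]; simp only [mul_assoc]
        _ = ((d * a ^ n) * (a ^ n * d)) * (a * g ^ n) := by rw [hC]
        _ = (d * a ^ n) * ((a ^ n * (d * a)) * g ^ n) := by
            simp only [mul_assoc]
        _ = (d * a ^ n) * (a ^ n * g ^ n) := by rw [A2 n hn]
        _ = (d * a ^ n) * (a * g) := by rw [P1]
        _ = d * (a ^ n * (a * g)) := by rw [mul_assoc]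
        _ = d * a ^ n := by rw [P3 n hn]
    have S3 : a ^ n * (d * (d * a)) = a ^ n * d := by
      calc a ^ n * (d * (d * a))
          = (a * (d * a ^ n)) * (d * (d * a)) := by rw [A1 n hn]
        _ = a * (d * (a ^ n * (d * (d * a)))) := by simp only [mul_assoc]
        _ = a * (d * (d * a ^ n)) := by rw [S2]
        _ = a ^ n * d := S1
    have S4 : d * a ^ n = a ^ n * d := S2.symm.trans S3
    have S5 : a ^ (n + 1) * d = a ^ n := by
      rw [pow_succ', mul_assoc, ← S4, A1 n hn]
    have S5' : d * a ^ (n + 1) = a ^ n := by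
      rw [pow_succ, ← mul_assoc, S4, mul_assoc, A2 n hn]
    have S6 : a * d = a * g := by
      calc a * d = (g ^ n * a ^ (n + 1)) * d := by rw [P5]
        _ = g ^ n * (a ^ (n + 1) * d) := by rw [mul_assoc]
        _ = g ^ n * a ^ n := by rw [S5]
        _ = a * g := P2
    have S6' : d * a = a * g := by
      calc d * a = d * (a ^ (n + 1) * g ^ n) := by rw [P4]
        _ = (d * a ^ (n + 1)) * g ^ n := by rw [mul_assoc]
        _ = a ^ n * g ^ n := by rw [S5']
        _ = a * g := P1
    exact ⟨d, h1, h2, S6.trans S6'.symm, h3⟩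
end

section
/- Let R be a unital ring with involution and let a ∈ R be Moore-Penrose invertible with Moore-Penrose inverse d. The following are equivalent: (1) a is EP; (2) there exists a unit u ∈ R such that d = u·a; (3) there exists a left invertible element v ∈ R (i.e., there exists t ∈ R with t·v = 1) such that d = v·a. -/
lemma mp_unique {R : Type*} [Ring R] [StarRing R] (a d₁ d₂ : R)
    (h₁ : IsMoorePenroseInverse a d₁) (h₂ : IsMoorePenroseInverse a d₂) : d₁ = d₂ := by
  obtain ⟨h11, h12, h13, h14⟩ := h₁
  obtain ⟨h21, h22, h23, h24⟩ := h₂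
  have had : a * d₁ = a * d₂ := by
    calc a * d₁ = star (a * d₁) := h13.symm
      _ = star (a * d₂ * a * d₁) := by rw [h21]
      _ = star ((a * d₂) * (a * d₁)) := by rw [mul_assoc (a * d₂) a d₁]
      _ = star (a * d₁) * star (a * d₂) := by rw [star_mul]
      _ = (a * d₁) * (a * d₂) := by rw [h13, h23]
      _ = (a * d₁ * a) * d₂ := by noncomm_ring
      _ = a * d₂ := by rw [h11]
  have hda : d₁ * a = d₂ * a := by
    calc d₁ * a = star (d₁ * a) := h14.symm
      _ = star (d₁ * (a * d₂ * a)) := by rw [h21]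
      _ = star ((d₁ * a) * (d₂ * a)) := by rw [show d₁ * (a * d₂ * a) = (d₁ * a) * (d₂ * a) by
            noncomm_ring]
      _ = star (d₂ * a) * star (d₁ * a) := by rw [star_mul]
      _ = (d₂ * a) * (d₁ * a) := by rw [h14, h24]
      _ = d₂ * (a * d₁ * a) := by noncomm_ring
      _ = d₂ * a := by rw [h11]
  calc d₁ = d₁ * a * d₁ := h12.symm
    _ = d₂ * a * d₁ := by rw [hda]
    _ = d₂ * (a * d₂) := by rw [mul_assoc, had]
    _ = d₂ := by rw [← mul_assoc, h22]

theorem ep_tfae_mp_unit {R : Type*} [Ring R] [StarRing R] (a d : R)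
    (hMP : IsMoorePenroseInverse a d) :
    List.TFAE
      [IsEP a,
       ∃ u : R, IsUnit u ∧ d = u * a,
       ∃ v : R, (∃ t : R, t * v = 1) ∧ d = v * a] := by
  obtain ⟨hada, hdad, hsad, hsda⟩ := hMP
  tfae_have 1 → 2 := by
    rintro ⟨x, hx1, hx2, hx3, hx4⟩
    have hxMP : IsMoorePenroseInverse a x := by
      refine ⟨hx1, hx2, hx4, ?_⟩
      rw [← hx3]; exact hx4
    have hxd : x = d := mp_unique a x d hxMP ⟨hada, hdad, hsad, hsda⟩
    have hcomm : a * d = d * a := by rw [← hxd]; exact hx3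
    -- the unit u = d*d + (1 - a*d), with inverse w = a*a + (1 - a*d)
    refine ⟨d * d + (1 - a * d), ?_, ?_⟩
    · have m1 : d * d * (a * a) = a * d := by
        calc d * d * (a * a) = d * (d * a) * a := by noncomm_ring
          _ = d * (a * d) * a := by rw [hcomm]
          _ = (d * a * d) * a := by noncomm_ring
          _ = d * a := by rw [hdad]
          _ = a * d := hcomm.symm
      have m2 : d * d * (1 - a * d) = 0 := by
        have : d * d * (a * d) = d * d := by
          calc d * d * (a * d) = d * (d * a * d) := by noncomm_ring
            _ = d * d := by rw [hdad]
        calc d * d * (1 - a * d) = d * d - d * d * (a * d) := by noncomm_ring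
          _ = 0 := by rw [this, sub_self]
      have m3 : (1 - a * d) * (a * a) = 0 := by
        have : (a * d) * (a * a) = a * a := by
          calc (a * d) * (a * a) = (a * d * a) * a := by noncomm_ring
            _ = a * a := by rw [hada]
        calc (1 - a * d) * (a * a) = a * a - (a * d) * (a * a) := by noncomm_ring
          _ = 0 := by rw [this, sub_self]
      have m4 : (1 - a * d) * (1 - a * d) = 1 - a * d := by
        have : (a * d) * (a * d) = a * d := by
          calc (a * d) * (a * d) = (a * d * a) * d := by noncomm_ring
            _ = a * d := by rw [hada]
        calc (1 - a * d) * (1 - a * d)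
            = 1 - a * d - a * d + (a * d) * (a * d) := by noncomm_ring
          _ = 1 - a * d := by rw [this]; noncomm_ring
      have n1 : a * a * (d * d) = a * d := by
        calc a * a * (d * d) = a * (a * d) * d := by noncomm_ring
          _ = a * (d * a) * d := by rw [hcomm]
          _ = (a * d * a) * d := by noncomm_ring
          _ = a * d := by rw [hada]
      have n2 : a * a * (1 - a * d) = 0 := by
        have : a * a * (a * d) = a * a := by
          calc a * a * (a * d) = a * (a * (a * d)) := by noncomm_ring
            _ = a * (a * (d * a)) := by rw [hcomm]
            _ = a * (a * d * a) := by noncomm_ring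
            _ = a * a := by rw [hada]
        calc a * a * (1 - a * d) = a * a - a * a * (a * d) := by noncomm_ring
          _ = 0 := by rw [this, sub_self]
      have n3 : (1 - a * d) * (d * d) = 0 := by
        have : (a * d) * (d * d) = d * d := by
          calc (a * d) * (d * d) = (d * a) * (d * d) := by rw [hcomm]
            _ = (d * a * d) * d := by noncomm_ring
            _ = d * d := by rw [hdad]
        calc (1 - a * d) * (d * d) = d * d - (a * d) * (d * d) := by noncomm_ring
          _ = 0 := by rw [this, sub_self]
      have huw : (d * d + (1 - a * d)) * (a * a + (1 - a * d)) = 1 := by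
        calc (d * d + (1 - a * d)) * (a * a + (1 - a * d))
            = d * d * (a * a) + d * d * (1 - a * d) + (1 - a * d) * (a * a)
              + (1 - a * d) * (1 - a * d) := by noncomm_ring
          _ = a * d + 0 + 0 + (1 - a * d) := by rw [m1, m2, m3, m4]
          _ = 1 := by noncomm_ring
      have hwu : (a * a + (1 - a * d)) * (d * d + (1 - a * d)) = 1 := by
        calc (a * a + (1 - a * d)) * (d * d + (1 - a * d))
            = a * a * (d * d) + a * a * (1 - a * d) + (1 - a * d) * (d * d)
              + (1 - a * d) * (1 - a * d) := by noncomm_ring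
          _ = a * d + 0 + 0 + (1 - a * d) := by rw [n1, n2, n3, m4]
          _ = 1 := by noncomm_ring
      exact ⟨⟨d * d + (1 - a * d), a * a + (1 - a * d), huw, hwu⟩, rfl⟩
    · have hdda : d * d * a = d := by
        calc d * d * a = d * (d * a) := by rw [mul_assoc]
          _ = d * (a * d) := by rw [hcomm]
          _ = d * a * d := by rw [mul_assoc]
          _ = d := hdad
      calc d = d * d * a := hdda.symm
        _ = (d * d + (1 - a * d)) * a := by
            have : (1 - a * d) * a = 0 := by
              calc (1 - a * d) * a = a - a * d * a := by noncomm_ring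
                _ = 0 := by rw [hada, sub_self]
            calc d * d * a = d * d * a + (1 - a * d) * a := by rw [this, add_zero]
              _ = (d * d + (1 - a * d)) * a := by noncomm_ring
  tfae_have 2 → 3 := by
    rintro ⟨u, hu, hdua⟩
    refine ⟨u, ⟨↑hu.unit⁻¹, ?_⟩, hdua⟩
    calc (↑hu.unit⁻¹ : R) * u = ↑hu.unit⁻¹ * ↑hu.unit := by rw [hu.unit_spec]
      _ = 1 := hu.unit.inv_mul
  tfae_have 3 → 1 := by
    rintro ⟨v, ⟨t, htv⟩, hdva⟩
    have hd_mul : ∀ y : R, d * y = v * (a * y) := fun y => by rw [hdva, mul_assoc]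
    -- step 1 : a * (a * d) = a
    have e1 : v * (a * (a * d)) = v * a := by
      calc v * (a * (a * d)) = (v * a) * (a * d) := by noncomm_ring
        _ = d * (a * d) := by rw [← hdva]
        _ = d := by rw [← mul_assoc]; exact hdad
        _ = v * a := hdva
    have h1 : a * (a * d) = a := by
      calc a * (a * d) = (t * v) * (a * (a * d)) := by rw [htv, one_mul]
        _ = t * (v * (a * (a * d))) := by rw [mul_assoc]
        _ = t * (v * a) := by rw [e1]
        _ = (t * v) * a := by rw [← mul_assoc]
        _ = a := by rw [htv, one_mul]
    -- step 2 : d * (d * a) = d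
    have hdd : d * (d * a) = d := by
      calc d * (d * a) = v * (a * (d * a)) := hd_mul _
        _ = v * (a * d * a) := by rw [mul_assoc a d a]
        _ = v * a := by rw [hada]
        _ = d := hdva.symm
    -- step 3 : (a*d)*(d*a) = a*d
    have hpq : a * d * (d * a) = a * d := by
      calc a * d * (d * a) = a * (d * (d * a)) := by rw [mul_assoc]
        _ = a * d := by rw [hdd]
    -- step 4 : (d*a)*(a*d) = a*d  (by taking stars)
    have hqp : d * a * (a * d) = a * d := by
      calc d * a * (a * d) = star (d * a) * star (a * d) := by rw [hsda, hsad]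
        _ = star ((a * d) * (d * a)) := (star_mul _ _).symm
        _ = star (a * d) := by rw [show (a * d) * (d * a) = a * d * (d * a) from rfl, hpq]
        _ = a * d := hsad
    have hcomm : a * d = d * a := by
      calc a * d = d * a * (a * d) := hqp.symm
        _ = d * (a * (a * d)) := by rw [mul_assoc]
        _ = d * a := by rw [h1]
    exact ⟨d, hada, hdad, hcomm, hsad⟩
  tfae_finish
end

section
/- Let R be a unital ring with involution and let a ∈ R be Moore-Penrose invertible with Moore-Penrose inverse d. The following are equivalent: (1) a is EP; (2) a ∈ a²·R (there exists s with a = a²·s) and (d·a)·d = d·(d·a); (3) a ∈ a²·R and (d·a)·a = a·(d·a); (4) a ∈ a²·R and a ∈ d·R; (5) a ∈ a²·R and a ∈ a*·R. -/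
theorem ep_tfae_a_sq {R : Type*} [Ring R] [StarRing R] (a d : R)
    (hMP : IsMoorePenroseInverse a d) :
    List.TFAE
      [IsEP a,
       (∃ s : R, a = a ^ 2 * s) ∧ (d * a) * d = d * (d * a),
       (∃ s : R, a = a ^ 2 * s) ∧ (d * a) * a = a * (d * a),
       (∃ s : R, a = a ^ 2 * s) ∧ ∃ r : R, a = d * r,
       (∃ s : R, a = a ^ 2 * s) ∧ ∃ r : R, a = star a * r] := by
  obtain ⟨h1, h2, h3, h4⟩ := hMP
  have had : a * d = star d * star a := by rw [← h3, star_mul]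
  have hda : d * a = star a * star d := by rw [← h4, star_mul]
  -- key: EP implies a*d = d*a (uniqueness of the MP inverse)
  have key : IsEP a → a * d = d * a := by
    rintro ⟨x, hx1, hx2, hxc, hxs⟩
    have hsxa : star (x * a) = x * a := by rw [← hxc, hxs, hxc]
    have e1 : star a = star a * (a * x) := by
      calc star a = star (a * x * a) := by rw [hx1]
        _ = star a * (a * x) := by rw [star_mul, hxs]
    have e2 : a * d = a * x := by
      calc a * d = star d * star a := had
        _ = star d * (star a * (a * x)) := by rw [← e1]
        _ = (star d * star a) * (a * x) := by rw [mul_assoc]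
        _ = (a * d) * (a * x) := by rw [← had]
        _ = ((a * d) * a) * x := by rw [← mul_assoc]
        _ = a * x := by rw [h1]
    have e3 : star a = (x * a) * star a := by
      calc star a = star (a * (x * a)) := by rw [← mul_assoc, hx1]
        _ = (x * a) * star a := by rw [star_mul, hsxa]
    have e4 : d * a = x * a := by
      calc d * a = star a * star d := hda
        _ = ((x * a) * star a) * star d := by rw [← e3]
        _ = (x * a) * (star a * star d) := by rw [mul_assoc]
        _ = (x * a) * (d * a) := by rw [← hda]
        _ = x * (a * (d * a)) := by rw [mul_assoc]
        _ = x * (a * d * a) := by rw [← mul_assoc a d a]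
        _ = x * a := by rw [h1]
    have e5 : d = x := by
      calc d = d * a * d := h2.symm
        _ = (x * a) * d := by rw [e4]
        _ = x * (a * d) := by rw [mul_assoc]
        _ = x * (a * x) := by rw [e2]
        _ = x * a * x := by rw [← mul_assoc]
        _ = x := hx2
    rw [e2, hxc, ← e4]
  have hsq_of_comm : a * d = d * a → a = a ^ 2 * d := by
    intro hc
    rw [pow_two, mul_assoc, hc, ← mul_assoc, h1]
  tfae_have 1 → 2 := by
    intro h
    have hc := key h
    refine ⟨⟨d, hsq_of_comm hc⟩, ?_⟩
    rw [h2, ← hc, ← mul_assoc, h2]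
  tfae_have 1 → 3 := by
    intro h
    have hc := key h
    refine ⟨⟨d, hsq_of_comm hc⟩, ?_⟩
    have l1 : d * a * a = a := by rw [← hc, h1]
    have l2 : a * (d * a) = a := by rw [← mul_assoc, h1]
    exact l1.trans l2.symm
  tfae_have 3 → 4 := by
    rintro ⟨hsq, h3'⟩
    have l2 : a * (d * a) = a := by rw [← mul_assoc, h1]
    refine ⟨hsq, a * a, ?_⟩
    calc a = d * a * a := (h3'.trans l2).symm
      _ = d * (a * a) := by rw [mul_assoc]
  tfae_have 4 → 5 := by
    rintro ⟨hsq, r, hr⟩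
    have lB : d * a * a = a := by
      calc d * a * a = d * a * (d * r) := by rw [← hr]
        _ = d * a * d * r := by rw [← mul_assoc]
        _ = d * r := by rw [h2]
        _ = a := hr.symm
    refine ⟨hsq, star d * a, ?_⟩
    calc a = d * a * a := lB.symm
      _ = (star a * star d) * a := by rw [hda]
      _ = star a * (star d * a) := by rw [mul_assoc]
  tfae_have 2 → 5 := by
    rintro ⟨hsq, h2'⟩
    rw [h2, ← mul_assoc] at h2'
    have hsd : star d = star a * (star d * star d) := by
      calc star d = star (d * d * a) := by rw [← h2']
        _ = star a * (star d * star d) := by rw [star_mul, star_mul]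
    refine ⟨hsq, star d * star d * star a * a, ?_⟩
    calc a = a * d * a := h1.symm
      _ = (star d * star a) * a := by rw [had]
      _ = star d * (star a * a) := by rw [mul_assoc]
      _ = (star a * (star d * star d)) * (star a * a) := by rw [← hsd]
      _ = star a * (star d * star d * star a * a) := by
          simp only [mul_assoc]
  tfae_have 5 → 1 := by
    rintro ⟨⟨s, hs⟩, ⟨r, hr⟩⟩
    have lA : star a = (d * a) * star a := by
      calc star a = star (a * (d * a)) := by rw [← mul_assoc, h1]
        _ = (d * a) * star a := by rw [star_mul, h4]
    have lB : d * a * a = a := by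
      have : a = d * a * a := by
        calc a = star a * r := hr
          _ = ((d * a) * star a) * r := by rw [← lA]
          _ = (d * a) * (star a * r) := by rw [mul_assoc]
          _ = d * a * a := by rw [← hr]
      exact this.symm
    have lC : d * a = a * s := by
      calc d * a = d * (a ^ 2 * s) := by rw [← hs]
        _ = d * (a * a * s) := by rw [pow_two]
        _ = d * a * a * s := by rw [← mul_assoc, ← mul_assoc]
        _ = a * s := by rw [lB]
    have lE : (a * d) * (d * a) = d * a := by
      calc (a * d) * (d * a) = (a * d) * (a * s) := by rw [lC]
        _ = a * d * a * s := by rw [← mul_assoc]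
        _ = a * s := by rw [h1]
        _ = d * a := lC.symm
    have lD : (d * a) * (a * d) = a * d := by
      calc (d * a) * (a * d) = d * a * a * d := by rw [← mul_assoc]
        _ = a * d := by rw [lB]
    have hcomm : a * d = d * a := by
      have hst := congrArg star lE
      rw [star_mul, h3, h4] at hst
      exact lD.symm.trans hst
    exact ⟨d, h1, h2, hcomm, h3⟩
  tfae_finish
end
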